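/- Suppose the birth–death chain started at k hits 0 with probability 1. Then for any stopping time T and any n ≥ 1, E[G_T^n] ≤ x_k/(t_{n−1} l_n), where G_T^n is the number of times m with 0 ≤ m ≤ T−1 and X_m = n. -/

import Mathlib

open MeasureTheory Filter Topology Finset
open scoped ENNReal NNReal Classical

/-- Partial products `t_n = (l_1 ⋯ l_n)/(r_1 ⋯ r_n)`, with `t_0 = 1`. -/
noncomputable def tp (l r : ℕ → ℝ) (n : ℕ) : ℝ :=
  (∏ i ∈ Finset.Icc 1 n, l i) / (∏ i ∈ Finset.Icc 1 n, r i)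

/-- `x_n = Σ_{i=0}^{n-1} t_i`. -/
noncomputable def xp (l r : ℕ → ℝ) (n : ℕ) : ℝ :=
  ∑ i ∈ Finset.range n, tp l r i

/-- The natural filtration of the process `X` (σ-algebra generated by `X_0, …, X_m`). -/
def natFilt {Ω : Type*} (X : ℕ → Ω → ℕ) (m : ℕ) : MeasurableSpace Ω :=
  ⨆ i ∈ Finset.range (m + 1), MeasurableSpace.comap (X i) ⊤

/-- A birth–death chain on ℕ started at `k`, with up–probabilities `r n` and
down–probabilities `l n` for states `n ≥ 1`, and `0` absorbing.  The Markov
property is encoded by conditioning on arbitrary events of the natural filtration. -/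
structure IsBDChain {Ω : Type*} [MeasurableSpace Ω] (P : Measure Ω)
    (X : ℕ → Ω → ℕ) (k : ℕ) (l r : ℕ → ℝ) : Prop where
  isProb : IsProbabilityMeasure P
  one_le_k : 1 ≤ k
  l_pos : ∀ n, 1 ≤ n → 0 < l n
  r_pos : ∀ n, 1 ≤ n → 0 < r n
  lr_one : ∀ n, 1 ≤ n → l n + r n = 1
  meas : ∀ m, Measurable (X m)
  init : ∀ᵐ ω ∂P, X 0 ω = k
  absorb : ∀ᵐ ω ∂P, ∀ m, X m ω = 0 → X (m + 1) ω = 0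
  step_up : ∀ m n, 1 ≤ n → ∀ A : Set Ω, MeasurableSet[natFilt X m] A →
    P (A ∩ {ω | X m ω = n ∧ X (m + 1) ω = n + 1}) =
      ENNReal.ofReal (r n) * P (A ∩ {ω | X m ω = n})
  step_down : ∀ m n, 1 ≤ n → ∀ A : Set Ω, MeasurableSet[natFilt X m] A →
    P (A ∩ {ω | X m ω = n ∧ X (m + 1) ω = n - 1}) =
      ENNReal.ofReal (l n) * P (A ∩ {ω | X m ω = n})

/-- A (finite-valued) stopping time for the natural filtration of `X`. -/
def IsBDStop {Ω : Type*} (X : ℕ → Ω → ℕ) (T : Ω → ℕ) : Prop :=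
  ∀ m, MeasurableSet[natFilt X m] {ω | T ω = m}

/-- An extended-ℕ-valued stopping time for the natural filtration of `X`. -/
def IsBDStopE {Ω : Type*} (X : ℕ → Ω → ℕ) (T : Ω → ℕ∞) : Prop :=
  ∀ m : ℕ, MeasurableSet[natFilt X m] {ω | T ω = (m : ℕ∞)}

/-- First hitting time of the set `S ⊆ ℕ` by the path `m ↦ X m ω`, valued in `ℕ∞`. -/
noncomputable def hitTime {Ω : Type*} (X : ℕ → Ω → ℕ) (S : Set ℕ) (ω : Ω) : ℕ∞ :=
  sInf ((fun m : ℕ => (m : ℕ∞)) '' {m | X m ω ∈ S})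

/-- `T_∂`: the first hitting time of `0`, with value `∞` if `0` is never hit. -/
noncomputable def hit0 {Ω : Type*} (X : ℕ → Ω → ℕ) (ω : Ω) : ℕ∞ :=
  hitTime X {0} ω

/-- `G_T^n`: the number of times `m` with `0 ≤ m ≤ T-1` and `X_m = n` (finite `T`). -/
def count {Ω : Type*} (X : ℕ → Ω → ℕ) (n : ℕ) (T : Ω → ℕ) (ω : Ω) : ℕ :=
  ((Finset.range (T ω)).filter fun m => X m ω = n).card

/-- `G_τ^n` for an `ℕ∞`-valued time `τ`, valued in `ℝ≥0∞`. -/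
noncomputable def countE {Ω : Type*} (X : ℕ → Ω → ℕ) (n : ℕ) (τ : Ω → ℕ∞) (ω : Ω) : ℝ≥0∞ :=
  ∑' m : ℕ, if (m : ℕ∞) < τ ω ∧ X m ω = n then 1 else 0

/-! The stopped scale function `h j = x_(min j n)` is harmonic for the chain at every state
except `n`, where the one-step mean falls short of `h n` by `t_(n-1) l_n`. Hence
`E h(X_(m+1)) + t_(n-1) l_n P(X_m = n) = E h(X_m)`, and telescoping gives
`t_(n-1) l_n Σ_m P(X_m = n) ≤ h k ≤ x_k`. The sum is the expected total number of visits
to `n`, which dominates `G_T^n` for every time `T`. -/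

section ScaleFunction

variable {l r : ℕ → ℝ}

lemma tp_pos (hl : ∀ j, 1 ≤ j → 0 < l j) (hr : ∀ j, 1 ≤ j → 0 < r j) (i : ℕ) :
    0 < tp l r i :=
  div_pos (prod_pos fun j hj => hl j (mem_Icc.mp hj).1)
    (prod_pos fun j hj => hr j (mem_Icc.mp hj).1)

lemma r_mul_tp_succ (hr : ∀ j, 1 ≤ j → 0 < r j) (j : ℕ) :
    r (j + 1) * tp l r (j + 1) = l (j + 1) * tp l r j := by
  have hr_succ : r (j + 1) ≠ 0 := (hr _ j.succ_pos).ne'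
  have hprod : ∏ i ∈ Icc 1 j, r i ≠ 0 := (prod_pos fun i hi => hr i (mem_Icc.mp hi).1).ne'
  rw [tp, tp, prod_Icc_succ_top (by omega), prod_Icc_succ_top (by omega)]
  field_simp

lemma xp_succ (i : ℕ) : xp l r (i + 1) = xp l r i + tp l r i := sum_range_succ _ _

lemma xp_nonneg (hl : ∀ j, 1 ≤ j → 0 < l j) (hr : ∀ j, 1 ≤ j → 0 < r j) (i : ℕ) :
    0 ≤ xp l r i :=
  sum_nonneg fun j _ => (tp_pos hl hr j).le

lemma xp_mono (hl : ∀ j, 1 ≤ j → 0 < l j) (hr : ∀ j, 1 ≤ j → 0 < r j) : Monotone (xp l r) :=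
  monotone_nat_of_le_succ fun i => by
    rw [xp_succ]
    exact le_add_of_nonneg_right (tp_pos hl hr i).le

noncomputable def stoppedScale (l r : ℕ → ℝ) (n j : ℕ) : ℝ := xp l r (min j n)

lemma stoppedScale_nonneg (hl : ∀ j, 1 ≤ j → 0 < l j) (hr : ∀ j, 1 ≤ j → 0 < r j) (n j : ℕ) :
    0 ≤ stoppedScale l r n j :=
  xp_nonneg hl hr _

lemma stoppedScale_harmonic (hr : ∀ j, 1 ≤ j → 0 < r j) (hlr : ∀ j, 1 ≤ j → l j + r j = 1)
    {n i : ℕ} (hi : 1 ≤ i) :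
    r i * stoppedScale l r n (i + 1) + l i * stoppedScale l r n (i - 1)
      + (if i = n then tp l r (n - 1) * l n else 0) = stoppedScale l r n i := by
  obtain ⟨j, rfl⟩ : ∃ j, i = j + 1 := ⟨i - 1, by omega⟩
  have hsum := hlr (j + 1) (by omega)
  rcases lt_trichotomy (j + 1) n with h | rfl | h <;>
    simp only [stoppedScale, Nat.add_sub_cancel]
  · rw [if_neg h.ne, min_eq_left (by omega), min_eq_left (by omega), min_eq_left h.le,
      xp_succ, xp_succ]
    linear_combination (xp l r j + tp l r j) * hsum + r_mul_tp_succ (l := l) hr j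
  · rw [if_true, min_eq_right (by omega), min_eq_left (by omega), min_self, xp_succ]
    linear_combination (xp l r j + tp l r j) * hsum
  · rw [if_neg h.ne', min_eq_right (by omega), min_eq_right (by omega), min_eq_right h.le]
    linear_combination xp l r n * hsum

end ScaleFunction

section Occupation

variable {Ω : Type*} [MeasurableSpace Ω] {μ : Measure Ω}

lemma lintegral_eq_tsum_setLIntegral_fiber {Y : Ω → ℕ} (hY : Measurable Y) (f : Ω → ℝ≥0∞) :
    ∫⁻ ω, f ω ∂μ = ∑' i, ∫⁻ ω in Y ⁻¹' {i}, f ω ∂μ := by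
  rw [← lintegral_iUnion (fun i => hY (measurableSet_singleton i)) (pairwise_disjoint_fiber Y),
    ← Set.preimage_iUnion, Set.iUnion_of_singleton, Set.preimage_univ, Measure.restrict_univ]

lemma setLIntegral_comp_fiber {Y : Ω → ℕ} (hY : Measurable Y) (g : ℕ → ℝ≥0∞) (i : ℕ) :
    ∫⁻ ω in Y ⁻¹' {i}, g (Y ω) ∂μ = g i * μ (Y ⁻¹' {i}) := by
  rw [setLIntegral_congr_fun (hY (measurableSet_singleton i)) fun ω (hω : Y ω = i) => by
    rw [hω], setLIntegral_const]

lemma lintegral_comp_eq_tsum {Y : Ω → ℕ} (hY : Measurable Y) (g : ℕ → ℝ≥0∞) :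
    ∫⁻ ω, g (Y ω) ∂μ = ∑' i, g i * μ (Y ⁻¹' {i}) := by
  rw [lintegral_eq_tsum_setLIntegral_fiber hY]
  exact tsum_congr (setLIntegral_comp_fiber hY g)

lemma lintegral_countE_le_tsum {X : ℕ → Ω → ℕ} (hX : ∀ m, Measurable (X m)) (n : ℕ)
    (τ : Ω → ℕ∞) : ∫⁻ ω, countE X n τ ω ∂μ ≤ ∑' m, μ (X m ⁻¹' {n}) := by
  have hle : ∀ ω, countE X n τ ω ≤ ∑' m, (X m ⁻¹' {n}).indicator (fun _ => 1) ω := fun ω =>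
    ENNReal.tsum_le_tsum fun m => by
      by_cases hm : X m ω = n
      · simp only [Set.indicator_of_mem (show ω ∈ X m ⁻¹' {n} from hm), hm, and_true]
        split_ifs <;> simp
      · simp [hm]
  calc ∫⁻ ω, countE X n τ ω ∂μ
      ≤ ∫⁻ ω, ∑' m, (X m ⁻¹' {n}).indicator (fun _ => 1) ω ∂μ := lintegral_mono hle
    _ = ∑' m, μ (X m ⁻¹' {n}) := by
      rw [lintegral_tsum fun m => (measurable_const.indicator
        (hX m (measurableSet_singleton n))).aemeasurable]
      exact tsum_congr fun m => lintegral_indicator_one (hX m (measurableSet_singleton n))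

end Occupation

lemma disjoint_inter_preimage_succ_pred {α : Type*} (s : Set α) (Y : α → ℕ) (i : ℕ) :
    Disjoint (s ∩ Y ⁻¹' {i + 1}) (s ∩ Y ⁻¹' {i - 1}) :=
  ((Set.disjoint_singleton.mpr (by omega)).preimage Y).mono Set.inter_subset_right
    Set.inter_subset_right

noncomputable def stepMean (l r : ℕ → ℝ) (g : ℕ → ℝ≥0∞) (i : ℕ) : ℝ≥0∞ :=
  if i = 0 then g 0 else ENNReal.ofReal (r i) * g (i + 1) + ENNReal.ofReal (l i) * g (i - 1)

lemma stepMean_stoppedScale_add {l r : ℕ → ℝ} (hl : ∀ j, 1 ≤ j → 0 < l j)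
    (hr : ∀ j, 1 ≤ j → 0 < r j) (hlr : ∀ j, 1 ≤ j → l j + r j = 1) {n : ℕ} (hn : 1 ≤ n)
    (i : ℕ) :
    stepMean l r (fun j => ENNReal.ofReal (stoppedScale l r n j)) i
      + (if i = n then ENNReal.ofReal (tp l r (n - 1) * l n) else 0)
      = ENNReal.ofReal (stoppedScale l r n i) := by
  rcases Nat.eq_zero_or_pos i with rfl | hi
  · simp [stepMean, (show 0 ≠ n by omega)]
  have hup : 0 ≤ r i * stoppedScale l r n (i + 1) :=
    mul_nonneg (hr i hi).le (stoppedScale_nonneg hl hr n _)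
  have hdown : 0 ≤ l i * stoppedScale l r n (i - 1) :=
    mul_nonneg (hl i hi).le (stoppedScale_nonneg hl hr n _)
  have hc : 0 ≤ tp l r (n - 1) * l n := (mul_pos (tp_pos hl hr _) (hl n hn)).le
  have hite : (if i = n then ENNReal.ofReal (tp l r (n - 1) * l n) else 0)
      = ENNReal.ofReal (if i = n then tp l r (n - 1) * l n else 0) := by
    split_ifs <;> simp
  rw [stepMean, if_neg hi.ne', hite, ← stoppedScale_harmonic hr hlr hi,
    ENNReal.ofReal_add (add_nonneg hup hdown) (by split_ifs <;> simp [hc]),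
    ENNReal.ofReal_add hup hdown,
    ENNReal.ofReal_mul (hr i hi).le, ENNReal.ofReal_mul (hl i hi).le]

namespace IsBDChain

variable {Ω : Type*} [MeasurableSpace Ω] {P : Measure Ω} {X : ℕ → Ω → ℕ} {k : ℕ}
  {l r : ℕ → ℝ}

lemma measure_step_up (hC : IsBDChain P X k l r) (m : ℕ) {i : ℕ} (hi : 1 ≤ i) :
    P (X m ⁻¹' {i} ∩ X (m + 1) ⁻¹' {i + 1}) = ENNReal.ofReal (r i) * P (X m ⁻¹' {i}) := by
  have h := hC.step_up m i hi Set.univ MeasurableSet.univ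
  rw [Set.univ_inter, Set.univ_inter] at h
  exact h

lemma measure_step_down (hC : IsBDChain P X k l r) (m : ℕ) {i : ℕ} (hi : 1 ≤ i) :
    P (X m ⁻¹' {i} ∩ X (m + 1) ⁻¹' {i - 1}) = ENNReal.ofReal (l i) * P (X m ⁻¹' {i}) := by
  have h := hC.step_down m i hi Set.univ MeasurableSet.univ
  rw [Set.univ_inter, Set.univ_inter] at h
  exact h

lemma measurableSet_fiber (hC : IsBDChain P X k l r) (m j : ℕ) : MeasurableSet (X m ⁻¹' {j}) :=
  hC.meas m (measurableSet_singleton j)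

lemma measurableSet_step (hC : IsBDChain P X k l r) (m i j : ℕ) :
    MeasurableSet (X m ⁻¹' {i} ∩ X (m + 1) ⁻¹' {j}) :=
  (hC.measurableSet_fiber m i).inter (hC.measurableSet_fiber (m + 1) j)

lemma preimage_ae_eq_step (hC : IsBDChain P X k l r) (m : ℕ) {i : ℕ} (hi : 1 ≤ i) :
    X m ⁻¹' {i} =ᵐ[P]
      (X m ⁻¹' {i} ∩ X (m + 1) ⁻¹' {i + 1} ∪ X m ⁻¹' {i} ∩ X (m + 1) ⁻¹' {i - 1} : Set Ω) := by
  have := hC.isProb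
  have hfull : P (X m ⁻¹' {i} ∩ X (m + 1) ⁻¹' {i + 1} ∪ X m ⁻¹' {i} ∩ X (m + 1) ⁻¹' {i - 1})
      = P (X m ⁻¹' {i}) := by
    rw [measure_union (disjoint_inter_preimage_succ_pred _ _ i) (hC.measurableSet_step m i _),
      hC.measure_step_up m hi, hC.measure_step_down m hi, ← add_mul,
      ← ENNReal.ofReal_add (hC.r_pos i hi).le (hC.l_pos i hi).le, add_comm, hC.lr_one i hi,
      ENNReal.ofReal_one, one_mul]
  have hmeas := (hC.measurableSet_step m i (i + 1)).union (hC.measurableSet_step m i (i - 1))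
  exact (ae_eq_of_subset_of_measure_ge (Set.union_subset Set.inter_subset_left
    Set.inter_subset_left) hfull.ge hmeas.nullMeasurableSet (measure_ne_top _ _)).symm

lemma setLIntegral_comp_succ (hC : IsBDChain P X k l r) (g : ℕ → ℝ≥0∞) (m i : ℕ) :
    ∫⁻ ω in X m ⁻¹' {i}, g (X (m + 1) ω) ∂P = stepMean l r g i * P (X m ⁻¹' {i}) := by
  rcases Nat.eq_zero_or_pos i with rfl | hi
  · have habsorbed : ∀ᵐ ω ∂P, ω ∈ X m ⁻¹' {0} → g (X (m + 1) ω) = g 0 := by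
      filter_upwards [hC.absorb] with ω hω h0
      rw [hω m h0]
    rw [setLIntegral_congr_fun_ae (hC.measurableSet_fiber m 0) habsorbed, setLIntegral_const,
      stepMean, if_pos rfl]
  have hconst : ∀ j, ∫⁻ ω in X m ⁻¹' {i} ∩ X (m + 1) ⁻¹' {j}, g (X (m + 1) ω) ∂P
      = g j * P (X m ⁻¹' {i} ∩ X (m + 1) ⁻¹' {j}) := fun j => by
    rw [setLIntegral_congr_fun (hC.measurableSet_step m i j)
      fun ω (hω : _ ∧ X (m + 1) ω = j) => by rw [hω.2], setLIntegral_const]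
  rw [setLIntegral_congr (hC.preimage_ae_eq_step m hi),
    lintegral_union (hC.measurableSet_step m i _) (disjoint_inter_preimage_succ_pred _ _ i),
    hconst, hconst,
    hC.measure_step_up m hi, hC.measure_step_down m hi, stepMean, if_neg hi.ne']
  ring

lemma lintegral_comp_succ (hC : IsBDChain P X k l r) (g : ℕ → ℝ≥0∞) (m : ℕ) :
    ∫⁻ ω, g (X (m + 1) ω) ∂P = ∑' i, stepMean l r g i * P (X m ⁻¹' {i}) := by
  rw [lintegral_eq_tsum_setLIntegral_fiber (hC.meas m)]
  exact tsum_congr (hC.setLIntegral_comp_succ g m)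

lemma tsum_tsum_le_of_stepMean_add_eq (hC : IsBDChain P X k l r) (g d : ℕ → ℝ≥0∞)
    (hgd : ∀ i, stepMean l r g i + d i = g i) :
    ∑' m, ∑' i, d i * P (X m ⁻¹' {i}) ≤ g k := by
  have := hC.isProb
  have hstep : ∀ m, ∫⁻ ω, g (X (m + 1) ω) ∂P + ∑' i, d i * P (X m ⁻¹' {i})
      = ∫⁻ ω, g (X m ω) ∂P := fun m => by
    rw [hC.lintegral_comp_succ, lintegral_comp_eq_tsum (hC.meas m), ← ENNReal.tsum_add]
    exact tsum_congr fun i => by rw [← add_mul, hgd]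
  have htelescope : ∀ M, ∫⁻ ω, g (X M ω) ∂P + ∑ m ∈ range M, ∑' i, d i * P (X m ⁻¹' {i})
      = ∫⁻ ω, g (X 0 ω) ∂P := fun M => by
    induction M with
    | zero => simp
    | succ M ih => rw [sum_range_succ, ← ih, ← hstep M, add_assoc, add_comm (∑' i, _)]
  have hinit : ∫⁻ ω, g (X 0 ω) ∂P = g k := by
    rw [lintegral_congr_ae (hC.init.mono fun ω h => by rw [h]), lintegral_const, measure_univ,
      mul_one]
  rw [ENNReal.tsum_eq_iSup_nat, ← hinit]
  exact iSup_le fun M => le_add_self.trans (htelescope M).le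

lemma tsum_measure_preimage_singleton_le (hC : IsBDChain P X k l r) {n : ℕ} (hn : 1 ≤ n) :
    ∑' m, P (X m ⁻¹' {n}) ≤ ENNReal.ofReal (xp l r k / (tp l r (n - 1) * l n)) := by
  have hc : 0 < tp l r (n - 1) * l n := mul_pos (tp_pos hC.l_pos hC.r_pos _) (hC.l_pos n hn)
  have hbound := hC.tsum_tsum_le_of_stepMean_add_eq _ _
    (stepMean_stoppedScale_add hC.l_pos hC.r_pos hC.lr_one hn)
  simp only [ite_mul, zero_mul, tsum_ite_eq, ENNReal.tsum_mul_left] at hbound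
  rw [ENNReal.ofReal_div_of_pos hc, ENNReal.le_div_iff_mul_le (Or.inl (by positivity))
    (Or.inl ENNReal.ofReal_ne_top), mul_comm]
  exact hbound.trans (ENNReal.ofReal_le_ofReal (xp_mono hC.l_pos hC.r_pos (min_le_left k n)))

end IsBDChain

theorem stmt11_general {Ω : Type*} [MeasurableSpace Ω] (P : Measure Ω) (X : ℕ → Ω → ℕ)
    (k : ℕ) (l r : ℕ → ℝ) (hC : IsBDChain P X k l r)
    (T : Ω → ℕ∞) (n : ℕ) (hn : 1 ≤ n) :
    ∫⁻ ω, countE X n T ω ∂P ≤ ENNReal.ofReal (xp l r k / (tp l r (n - 1) * l n)) :=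
  (lintegral_countE_le_tsum hC.meas n T).trans (hC.tsum_measure_preimage_singleton_le hn)

/-- If the chain hits `0` with probability `1`, then for any
stopping time `T` and any `n ≥ 1`, `E[G_T^n] ≤ x_k/(t_{n-1} l_n)`. -/
theorem stmt11 {Ω : Type*} [MeasurableSpace Ω] (P : Measure Ω) (X : ℕ → Ω → ℕ)
    (k : ℕ) (l r : ℕ → ℝ) (hC : IsBDChain P X k l r)
    (hone : P {ω | ∃ m : ℕ, X m ω = 0} = 1)
    (T : Ω → ℕ∞) (hstop : IsBDStopE X T) (n : ℕ) (hn : 1 ≤ n) :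
    ∫⁻ ω, countE X n T ω ∂P ≤ ENNReal.ofReal (xp l r k / (tp l r (n - 1) * l n)) :=
  stmt11_general P X k l r hC T n hn
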